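/- (Gluing inequality for the quadratic GW functional.) Let S, X, Y be compact metric spaces with probability measures σ, μ, ν, and let π ∈ P(S × X × Y) have marginals σ, μ, ν. Then the L²(π⊗π) triangle inequality holds: (∬ |d_X(x,x') − d_Y(y,y')|² dπ dπ)^{1/2} ≤ (∬ |d_X(x,x') − d_S(s,s')|² dπ dπ)^{1/2} + (∬ |d_S(s,s') − d_Y(y,y')|² dπ dπ)^{1/2}. In particular, GW(X,Y) ≤ GW(S,X) + GW(S,Y) (triangle inequality for the GW distance), using a glued plan built from optimal two-plans. -/

import Mathlib

open MeasureTheory Filter Topology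

/-- The Gromov–Wasserstein cost of a plan `π` on `X × Y`. -/
noncomputable def gwCost {X Y : Type*} [PseudoMetricSpace X] [PseudoMetricSpace Y]
    [MeasurableSpace X] [MeasurableSpace Y] (π : Measure (X × Y)) : ℝ :=
  ∫ p, ∫ q, (dist p.1 q.1 - dist p.2 q.2) ^ 2 ∂π ∂π

/-- `π` is a coupling of `μ` and `ν`. -/
def IsCoupling {X Y : Type*} [MeasurableSpace X] [MeasurableSpace Y]
    (π : Measure (X × Y)) (μ : Measure X) (ν : Measure Y) : Prop :=
  π.map Prod.fst = μ ∧ π.map Prod.snd = ν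

/-- The squared Gromov–Wasserstein distance. -/
noncomputable def gwSq {X Y : Type*} [PseudoMetricSpace X] [PseudoMetricSpace Y]
    [MeasurableSpace X] [MeasurableSpace Y] (μ : Measure X) (ν : Measure Y) : ℝ :=
  sInf {c | ∃ π : Measure (X × Y), IsCoupling π μ ν ∧ c = gwCost π}

/-- `π` is an optimal Gromov–Wasserstein plan between `μ` and `ν`. -/
def IsOptGW {X Y : Type*} [PseudoMetricSpace X] [PseudoMetricSpace Y]
    [MeasurableSpace X] [MeasurableSpace Y]
    (π : Measure (X × Y)) (μ : Measure X) (ν : Measure Y) : Prop :=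
  IsCoupling π μ ν ∧ gwCost π = gwSq μ ν

/-- The LGW objective of a three-plan on `S × X × Y`:
`∬ |d_X(x,x') − d_Y(y,y')|² dπ dπ`. -/
noncomputable def lgwCost {S X Y : Type*} [PseudoMetricSpace X] [PseudoMetricSpace Y]
    [MeasurableSpace S] [MeasurableSpace X] [MeasurableSpace Y]
    (π : Measure (S × X × Y)) : ℝ :=
  ∫ p, ∫ q, (dist p.2.1 q.2.1 - dist p.2.2 q.2.2) ^ 2 ∂π ∂π

/-- The linear Gromov–Wasserstein value with reference `(S, σ)`:
infimum of the LGW objective over three-plans whose `(S,X)`- and `(S,Y)`-marginals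
are optimal GW plans. -/
noncomputable def lgw {S X Y : Type*} [PseudoMetricSpace S] [PseudoMetricSpace X]
    [PseudoMetricSpace Y] [MeasurableSpace S] [MeasurableSpace X] [MeasurableSpace Y]
    (σ : Measure S) (μ : Measure X) (ν : Measure Y) : ℝ :=
  sInf {c | ∃ π : Measure (S × X × Y),
    IsOptGW (π.map (fun p => (p.1, p.2.1))) σ μ ∧
    IsOptGW (π.map (fun p => (p.1, p.2.2))) σ ν ∧
    c = lgwCost π}

/-- The cost `c_ε` on `(S × X × Y)²`. -/
noncomputable def cEps {S X Y : Type*} [PseudoMetricSpace S] [PseudoMetricSpace X]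
    [PseudoMetricSpace Y] (ε : ℝ) (p q : S × X × Y) : ℝ :=
  ε * (dist p.2.1 q.2.1 - dist p.2.2 q.2.2) ^ 2
    + (dist p.1 q.1 - dist p.2.1 q.2.1) ^ 2
    + (dist p.1 q.1 - dist p.2.2 q.2.2) ^ 2

/-- The quadratic functional `π ↦ ∬ c_ε dπ dπ` of the ε-multi-marginal GW problem. -/
noncomputable def mgwEps {S X Y : Type*} [PseudoMetricSpace S] [PseudoMetricSpace X]
    [PseudoMetricSpace Y] [MeasurableSpace S] [MeasurableSpace X] [MeasurableSpace Y]
    (ε : ℝ) (π : Measure (S × X × Y)) : ℝ :=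
  ∫ p, ∫ q, cEps ε p q ∂π ∂π

/-- `π ∈ Π(σ, μ, ν)`: three-marginal coupling. -/
def IsTripleCoupling {S X Y : Type*} [MeasurableSpace S] [MeasurableSpace X]
    [MeasurableSpace Y] (π : Measure (S × X × Y))
    (σ : Measure S) (μ : Measure X) (ν : Measure Y) : Prop :=
  π.map Prod.fst = σ ∧ π.map (fun p => p.2.1) = μ ∧ π.map (fun p => p.2.2) = ν

/-!
Both inequalities are Minkowski's inequality in `L²(π ⊗ π)` for the pointwise identity
`d_X - d_Y = (d_X - d_S) + (d_S - d_Y)` on `(S × X × Y)²`. For the GW distance, pick `ε`-optimal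
plans `π₁ ∈ Π(σ, μ)` and `π₂ ∈ Π(σ, ν)` and glue them along `S`: the glued plan has
`(S, X)`- and `(S, Y)`-marginals `π₁`, `π₂` and an `(X, Y)`-marginal in `Π(μ, ν)`, whose GW cost
is therefore at least `gwSq μ ν`. Minkowski bounds its square root by
`√(gwCost π₁) + √(gwCost π₂)`, and `ε → 0` concludes.
-/

open ProbabilityTheory

section L2

variable {α : Type*} [MeasurableSpace α] {μ : Measure α}

lemma MeasureTheory.MemLp.norm_toLp_eq_sqrt_integral_sq {f : α → ℝ} (hf : MemLp f 2 μ) :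
    ‖hf.toLp f‖ = √(∫ x, f x ^ 2 ∂μ) := by
  have h : ∫ x, f x ^ 2 ∂μ = inner ℝ (hf.toLp f) (hf.toLp f) := by
    rw [L2.inner_def]
    refine integral_congr_ae ?_
    filter_upwards [hf.coeFn_toLp] with x hx
    simp [hx, sq]
  rw [h, real_inner_self_eq_norm_sq, Real.sqrt_sq (norm_nonneg _)]

lemma sqrt_integral_sq_sub_le {a b c : α → ℝ} (hab : MemLp (a - b) 2 μ)
    (hbc : MemLp (b - c) 2 μ) :
    √(∫ x, (a x - c x) ^ 2 ∂μ) ≤ √(∫ x, (a x - b x) ^ 2 ∂μ) + √(∫ x, (b x - c x) ^ 2 ∂μ) := by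
  have h := norm_add_le (hab.toLp _) (hbc.toLp _)
  simp only [← MemLp.toLp_add, MemLp.norm_toLp_eq_sqrt_integral_sq] at h
  simpa only [Pi.add_apply, Pi.sub_apply, sub_add_sub_cancel] using h

end L2

lemma sqrt_integral_integral_sq_sub_le {α : Type*} [MeasurableSpace α] (μ : Measure α)
    [SFinite μ] {a b c : α → α → ℝ}
    (hab : MemLp (fun z : α × α => a z.1 z.2 - b z.1 z.2) 2 (μ.prod μ))
    (hbc : MemLp (fun z : α × α => b z.1 z.2 - c z.1 z.2) 2 (μ.prod μ)) :
    √(∫ p, ∫ q, (a p q - c p q) ^ 2 ∂μ ∂μ)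
      ≤ √(∫ p, ∫ q, (a p q - b p q) ^ 2 ∂μ ∂μ) + √(∫ p, ∫ q, (b p q - c p q) ^ 2 ∂μ ∂μ) := by
  have hac : MemLp (fun z : α × α => a z.1 z.2 - c z.1 z.2) 2 (μ.prod μ) := by
    simpa only [Pi.add_def, sub_add_sub_cancel] using hab.add hbc
  rw [integral_integral (f := fun p q => (a p q - c p q) ^ 2) hac.integrable_sq,
    integral_integral (f := fun p q => (a p q - b p q) ^ 2) hab.integrable_sq,
    integral_integral (f := fun p q => (b p q - c p q) ^ 2) hbc.integrable_sq]
  exact sqrt_integral_sq_sub_le (a := fun z => a z.1 z.2) hab hbc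

lemma sqrt_integral_integral_sq_dist_sub_dist_le {S X Y : Type*}
    [PseudoMetricSpace S] [CompactSpace S] [MeasurableSpace S] [BorelSpace S]
    [PseudoMetricSpace X] [CompactSpace X] [MeasurableSpace X] [BorelSpace X]
    [PseudoMetricSpace Y] [CompactSpace Y] [MeasurableSpace Y] [BorelSpace Y]
    (π : Measure (S × X × Y)) [IsFiniteMeasure π] :
    √(∫ p, ∫ q, (dist p.2.1 q.2.1 - dist p.2.2 q.2.2) ^ 2 ∂π ∂π)
      ≤ √(∫ p, ∫ q, (dist p.2.1 q.2.1 - dist p.1 q.1) ^ 2 ∂π ∂π)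
        + √(∫ p, ∫ q, (dist p.1 q.1 - dist p.2.2 q.2.2) ^ 2 ∂π ∂π) :=
  sqrt_integral_integral_sq_sub_le π
    (ContinuousMap.memLp _ ℝ ⟨fun z : (S × X × Y) × (S × X × Y) =>
      dist z.1.2.1 z.2.2.1 - dist z.1.1 z.2.1, by fun_prop⟩)
    (ContinuousMap.memLp _ ℝ ⟨fun z : (S × X × Y) × (S × X × Y) =>
      dist z.1.1 z.2.1 - dist z.1.2.2 z.2.2.2, by fun_prop⟩)

lemma MeasureTheory.Measure.isProbabilityMeasure_of_map_eq {α β : Type*} [MeasurableSpace α]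
    [MeasurableSpace β] {π : Measure α} {f : α → β} {μ : Measure β} [IsProbabilityMeasure μ]
    (h : π.map f = μ) : IsProbabilityMeasure π := by
  have : IsProbabilityMeasure (π.map f) := h ▸ ‹_›
  exact isProbabilityMeasure_of_map f

lemma integral_integral_map {α β E : Type*} [MeasurableSpace α] [MeasurableSpace β]
    [NormedAddCommGroup E] [NormedSpace ℝ E] (μ : Measure α) [IsFiniteMeasure μ] {φ : α → β}
    (hφ : Measurable φ) {F : β → β → E} (hF : StronglyMeasurable (Function.uncurry F)) :
    ∫ p, ∫ q, F p q ∂(μ.map φ) ∂(μ.map φ) = ∫ p, ∫ q, F (φ p) (φ q) ∂μ ∂μ := by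
  have hint : StronglyMeasurable fun p => ∫ q, F p q ∂(μ.map φ) := hF.integral_prod_right'
  rw [integral_map hφ.aemeasurable hint.aestronglyMeasurable]
  refine integral_congr_ae (ae_of_all _ fun p => integral_map hφ.aemeasurable ?_)
  exact (hF.comp_measurable measurable_prodMk_left).aestronglyMeasurable

section GromovWasserstein

variable {S X Y : Type*}
  [PseudoMetricSpace S] [MeasurableSpace S]
  [PseudoMetricSpace X] [MeasurableSpace X]
  [PseudoMetricSpace Y] [MeasurableSpace Y]

lemma gwCost_map_prodMk [SecondCountableTopology X] [OpensMeasurableSpace X]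
    [SecondCountableTopology Y] [OpensMeasurableSpace Y] {Ω : Type*} [MeasurableSpace Ω]
    (π : Measure Ω) [IsFiniteMeasure π] {f : Ω → X} {g : Ω → Y} (hf : Measurable f)
    (hg : Measurable g) :
    gwCost (π.map fun ω => (f ω, g ω))
      = ∫ p, ∫ q, (dist (f p) (f q) - dist (g p) (g q)) ^ 2 ∂π ∂π :=
  integral_integral_map π (hf.prodMk hg)
    (F := fun a b : X × Y => (dist a.1 b.1 - dist a.2 b.2) ^ 2)
    (by fun_prop : Continuous _).stronglyMeasurable

lemma sqrt_gwCost_map_le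
    [CompactSpace S] [BorelSpace S] [CompactSpace X] [BorelSpace X]
    [CompactSpace Y] [BorelSpace Y] (π : Measure (S × X × Y)) [IsFiniteMeasure π] :
    √(gwCost (π.map fun p => (p.2.1, p.2.2)))
      ≤ √(gwCost (π.map fun p => (p.1, p.2.1))) + √(gwCost (π.map fun p => (p.1, p.2.2))) := by
  rw [gwCost_map_prodMk π measurable_snd.fst measurable_snd.snd,
    gwCost_map_prodMk π measurable_fst measurable_snd.fst,
    gwCost_map_prodMk π measurable_fst measurable_snd.snd]
  calc _ ≤ _ := sqrt_integral_integral_sq_dist_sub_dist_le π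
    _ = _ := by
      have hflip (p q : S × X × Y) :
          (dist p.2.1 q.2.1 - dist p.1 q.1) ^ 2 = (dist p.1 q.1 - dist p.2.1 q.2.1) ^ 2 :=
        sub_sq_comm _ _
      simp only [hflip]

variable {μ : Measure X} {ν : Measure Y}

lemma gwCost_nonneg (π : Measure (X × Y)) : 0 ≤ gwCost π :=
  integral_nonneg fun _ => integral_nonneg fun _ => sq_nonneg _

lemma gwSq_le_gwCost {π : Measure (X × Y)} (hπ : IsCoupling π μ ν) : gwSq μ ν ≤ gwCost π :=
  csInf_le ⟨0, by rintro _ ⟨π', -, rfl⟩; exact gwCost_nonneg π'⟩ ⟨π, hπ, rfl⟩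

variable [IsProbabilityMeasure μ] [IsProbabilityMeasure ν]

lemma nonempty_gwCost_couplings :
    {c | ∃ π : Measure (X × Y), IsCoupling π μ ν ∧ c = gwCost π}.Nonempty :=
  ⟨_, μ.prod ν, ⟨Measure.fst_prod, Measure.snd_prod⟩, rfl⟩

lemma exists_isCoupling_gwCost_lt {ε : ℝ} (hε : 0 < ε) :
    ∃ π : Measure (X × Y), IsCoupling π μ ν ∧ gwCost π < gwSq μ ν + ε := by
  obtain ⟨_, ⟨π, hπ, rfl⟩, hlt⟩ :=
    Real.lt_sInf_add_pos (nonempty_gwCost_couplings (μ := μ) (ν := ν)) hε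
  exact ⟨π, hπ, hlt⟩

end GromovWasserstein

section Gluing

variable {S X Y : Type*} [MeasurableSpace S]
  [MeasurableSpace X] [StandardBorelSpace X] [Nonempty X]
  [MeasurableSpace Y] [StandardBorelSpace Y] [Nonempty Y]
  (π₁ : Measure (S × X)) (π₂ : Measure (S × Y)) [IsFiniteMeasure π₁] [IsFiniteMeasure π₂]

noncomputable def MeasureTheory.Measure.glue : Measure (S × X × Y) :=
  π₁.fst ⊗ₘ (π₁.condKernel ×ₖ π₂.condKernel)

instance : IsFiniteMeasure (π₁.glue π₂) := by
  unfold Measure.glue; infer_instance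

lemma MeasureTheory.Measure.map_glue_fst : (π₁.glue π₂).map (fun p => (p.1, p.2.1)) = π₁ := by
  change (π₁.fst ⊗ₘ _).map (Prod.map id Prod.fst) = π₁
  rw [← compProd_map measurable_fst, ← Kernel.fst_eq, Kernel.fst_prod, disintegrate]

lemma MeasureTheory.Measure.map_glue_snd (h : π₁.fst = π₂.fst) :
    (π₁.glue π₂).map (fun p => (p.1, p.2.2)) = π₂ := by
  change (π₁.fst ⊗ₘ _).map (Prod.map id Prod.snd) = π₂
  rw [← compProd_map measurable_snd, ← Kernel.snd_eq, Kernel.snd_prod, h, disintegrate]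

lemma isCoupling_map_glue {σ : Measure S} {μ : Measure X} {ν : Measure Y}
    (h₁ : IsCoupling π₁ σ μ) (h₂ : IsCoupling π₂ σ ν) :
    IsCoupling ((π₁.glue π₂).map fun p => (p.2.1, p.2.2)) μ ν := by
  constructor
  · calc _ = ((π₁.glue π₂).map fun p => (p.1, p.2.1)).map Prod.snd := by
          simp only [Measure.map_map measurable_fst (measurable_snd.fst.prodMk measurable_snd.snd),
            Measure.map_map measurable_snd (measurable_fst.prodMk measurable_snd.fst)]; rfl
      _ = μ := by rw [Measure.map_glue_fst, h₁.2]
  · calc _ = ((π₁.glue π₂).map fun p => (p.1, p.2.2)).map Prod.snd := by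
          simp only [Measure.map_map measurable_snd (measurable_snd.fst.prodMk measurable_snd.snd),
            Measure.map_map measurable_snd (measurable_fst.prodMk measurable_snd.snd)]; rfl
      _ = ν := by rw [Measure.map_glue_snd _ _ (h₁.1.trans h₂.1.symm), h₂.2]

end Gluing

theorem sqrt_gwSq_triangle {S X Y : Type*}
    [MetricSpace S] [CompactSpace S] [MeasurableSpace S] [BorelSpace S]
    [MetricSpace X] [CompactSpace X] [MeasurableSpace X] [BorelSpace X]
    [MetricSpace Y] [CompactSpace Y] [MeasurableSpace Y] [BorelSpace Y]
    (σ : Measure S) (μ : Measure X) (ν : Measure Y)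
    [IsProbabilityMeasure σ] [IsProbabilityMeasure μ] [IsProbabilityMeasure ν] :
    √(gwSq μ ν) ≤ √(gwSq σ μ) + √(gwSq σ ν) := by
  have : Nonempty X := μ.nonempty_of_neZero
  have : Nonempty Y := ν.nonempty_of_neZero
  have happrox : ∀ ε > 0, √(gwSq μ ν) ≤ √(gwSq σ μ + ε) + √(gwSq σ ν + ε) := by
    intro ε hε
    obtain ⟨π₁, hπ₁, hlt₁⟩ := exists_isCoupling_gwCost_lt (μ := σ) (ν := μ) hε
    obtain ⟨π₂, hπ₂, hlt₂⟩ := exists_isCoupling_gwCost_lt (μ := σ) (ν := ν) hε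
    have := Measure.isProbabilityMeasure_of_map_eq hπ₁.1
    have := Measure.isProbabilityMeasure_of_map_eq hπ₂.1
    calc √(gwSq μ ν) ≤ √(gwCost ((π₁.glue π₂).map fun p => (p.2.1, p.2.2))) :=
          Real.sqrt_le_sqrt (gwSq_le_gwCost (isCoupling_map_glue π₁ π₂ hπ₁ hπ₂))
      _ ≤ √(gwCost ((π₁.glue π₂).map fun p => (p.1, p.2.1)))
          + √(gwCost ((π₁.glue π₂).map fun p => (p.1, p.2.2))) := sqrt_gwCost_map_le _
      _ = √(gwCost π₁) + √(gwCost π₂) := by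
          rw [Measure.map_glue_fst, Measure.map_glue_snd _ _ (hπ₁.1.trans hπ₂.1.symm)]
      _ ≤ √(gwSq σ μ + ε) + √(gwSq σ ν + ε) := by gcongr
  have hlim : Tendsto (fun ε => √(gwSq σ μ + ε) + √(gwSq σ ν + ε)) (𝓝[>] 0)
      (𝓝 (√(gwSq σ μ) + √(gwSq σ ν))) := by
    have hcont : Continuous fun ε => √(gwSq σ μ + ε) + √(gwSq σ ν + ε) := by fun_prop
    simpa using (hcont.tendsto 0).mono_left nhdsWithin_le_nhds
  exact ge_of_tendsto hlim (eventually_nhdsWithin_of_forall happrox)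

/-- gluing/Minkowski inequality for the quadratic GW functional, and the
triangle inequality for the GW distance. -/
theorem gw_triangle
    {S X Y : Type*}
    [MetricSpace S] [CompactSpace S] [MeasurableSpace S] [BorelSpace S]
    [MetricSpace X] [CompactSpace X] [MeasurableSpace X] [BorelSpace X]
    [MetricSpace Y] [CompactSpace Y] [MeasurableSpace Y] [BorelSpace Y]
    (σ : Measure S) (μ : Measure X) (ν : Measure Y)
    [IsProbabilityMeasure σ] [IsProbabilityMeasure μ] [IsProbabilityMeasure ν]
    (π : Measure (S × X × Y)) (hπ : IsTripleCoupling π σ μ ν) :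
    Real.sqrt (∫ p, ∫ q, (dist p.2.1 q.2.1 - dist p.2.2 q.2.2) ^ 2 ∂π ∂π)
      ≤ Real.sqrt (∫ p, ∫ q, (dist p.2.1 q.2.1 - dist p.1 q.1) ^ 2 ∂π ∂π)
        + Real.sqrt (∫ p, ∫ q, (dist p.1 q.1 - dist p.2.2 q.2.2) ^ 2 ∂π ∂π) ∧
    Real.sqrt (gwSq μ ν) ≤ Real.sqrt (gwSq σ μ) + Real.sqrt (gwSq σ ν) := by
  have := Measure.isProbabilityMeasure_of_map_eq hπ.1
  exact ⟨sqrt_integral_integral_sq_dist_sub_dist_le π,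
    sqrt_gwSq_triangle σ μ ν⟩
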